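/- arXiv:1103.5777 — 3 statements merged into one kernel-verified Lean document; each statement's English description precedes it below -/
import Mathlib

section
/- In the ring R = ℤ[a,b]/(aⁿ, Σ_{i=0}^{n-1} aⁿ⁻¹⁻ⁱ(−b)ⁱ), define cᵢ = aⁱ + aⁱ⁻¹b + ... + bⁱ = Σ_{j=0}^{i} aⁱ⁻ʲbʲ. Then c_{n-1} = 2·(aⁿ⁻¹ + aⁿ⁻³b² + aⁿ⁻⁵b⁴ + ...), i.e., c_{n-1} is divisible by 2 in R. -/
/-!
Adding the relation `∑ aⁿ⁻¹⁻ʲ (-b)ʲ = 0` to `c_{n-1} = ∑ aⁿ⁻¹⁻ʲ bʲ` gives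
`c_{n-1} = ∑ aⁿ⁻¹⁻ʲ (bʲ + (-b)ʲ)`, in which the odd terms cancel and the even ones double.
-/

open Finset

theorem Finset.sum_range_eq_sum_range_two_mul_of_odd {M : Type*} [AddCommMonoid M]
    (g : ℕ → M) (hg : ∀ j, Odd j → g j = 0) (n : ℕ) :
    ∑ j ∈ range n, g j = ∑ i ∈ range ((n + 1) / 2), g (2 * i) := by
  have hinj : Set.InjOn (2 * ·) (range ((n + 1) / 2) : Set ℕ) :=
    fun _ _ _ _ h ↦ by simpa using h
  rw [← sum_image hinj]
  refine (sum_subset ?_ ?_).symm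
  · intro j hj
    simp only [mem_image, mem_range] at hj ⊢
    omega
  · intro j hj hj'
    refine hg j (Nat.not_even_iff_odd.mp fun ⟨k, hk⟩ ↦ hj' ?_)
    simp only [mem_image, mem_range] at hj ⊢
    exact ⟨k, by omega, by omega⟩

theorem Finset.sum_range_mul_pow_add_neg_pow {A : Type*} [Ring A] (f : ℕ → A) (b : A) (n : ℕ) :
    ∑ j ∈ range n, f j * (b ^ j + (-b) ^ j)
      = 2 * ∑ i ∈ range ((n + 1) / 2), f (2 * i) * b ^ (2 * i) := by
  rw [sum_range_eq_sum_range_two_mul_of_odd _ (fun j hj ↦ by simp [hj.neg_pow]), mul_sum]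
  refine sum_congr rfl fun i _ ↦ ?_
  rw [(even_two_mul i).neg_pow, mul_add, ← two_mul]

theorem c_n_sub_one_divisible_by_two_general (n : ℕ) (A : Type*) [CommRing A] (a b : A)
    (h2 : ∑ i ∈ Finset.range n, a ^ (n - 1 - i) * (-b) ^ i = 0) :
    (∑ j ∈ Finset.range n, a ^ (n - 1 - j) * b ^ j)
      = 2 * ∑ i ∈ Finset.range ((n + 1) / 2), a ^ (n - 1 - 2 * i) * b ^ (2 * i) := by
  calc ∑ j ∈ range n, a ^ (n - 1 - j) * b ^ j
      = ∑ j ∈ range n, a ^ (n - 1 - j) * b ^ j + ∑ j ∈ range n, a ^ (n - 1 - j) * (-b) ^ j := by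
        rw [h2, add_zero]
    _ = ∑ j ∈ range n, a ^ (n - 1 - j) * (b ^ j + (-b) ^ j) := by
        simp only [mul_add, sum_add_distrib]
    _ = 2 * ∑ i ∈ range ((n + 1) / 2), a ^ (n - 1 - 2 * i) * b ^ (2 * i) :=
        sum_range_mul_pow_add_neg_pow (fun j ↦ a ^ (n - 1 - j)) b n

theorem c_n_sub_one_divisible_by_two (n : ℕ) (hn : 1 ≤ n) (A : Type*) [CommRing A] (a b : A)
    (h1 : a ^ n = 0) (h2 : ∑ i ∈ Finset.range n, a ^ (n - 1 - i) * (-b) ^ i = 0) :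
    (∑ j ∈ Finset.range n, a ^ (n - 1 - j) * b ^ j)
      = 2 * ∑ i ∈ Finset.range ((n + 1) / 2), a ^ (n - 1 - 2 * i) * b ^ (2 * i) :=
  c_n_sub_one_divisible_by_two_general n A a b h2
end

section
/- In the ring R = ℤ[a,b]/(aⁿ, Σ_{i=0}^{n-1} aⁿ⁻¹⁻ⁱ(−b)ⁱ), with cᵢ = Σ_{j=0}^{i} aⁱ⁻ʲbʲ, one has, for every i ≥ 0, (c_{n-1}/2)·aⁱ = (c_{n-1}/2)·bⁱ and c_{n-1+i} = 2·(c_{n-1}/2)·aⁱ. -/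
open Finset

private lemma two_mul_pair_sum {A : Type*} [AddCommMonoid A] (m : ℕ) (f : ℕ → A) :
    ∑ j ∈ range (2 * m), f j = ∑ k ∈ range m, (f (2 * k) + f (2 * k + 1)) := by
  induction m with
  | zero => simp
  | succ m ih =>
    have h : 2 * (m + 1) = (2 * m + 1) + 1 := by ring
    rw [h, sum_range_succ, sum_range_succ, ih, sum_range_succ]
    abel

theorem c_high_degree (n : ℕ) (hn : 1 ≤ n) (A : Type*) [CommRing A] (a b : A)
    (h1 : a ^ n = 0) (h2 : ∑ i ∈ Finset.range n, a ^ (n - 1 - i) * (-b) ^ i = 0) (i : ℕ) :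
    (∑ j ∈ Finset.range ((n + 1) / 2), a ^ (n - 1 - 2 * j) * b ^ (2 * j)) * a ^ i
      = (∑ j ∈ Finset.range ((n + 1) / 2), a ^ (n - 1 - 2 * j) * b ^ (2 * j)) * b ^ i ∧
    (∑ j ∈ Finset.range (n + i), a ^ (n - 1 + i - j) * b ^ j)
      = 2 * ((∑ j ∈ Finset.range ((n + 1) / 2), a ^ (n - 1 - 2 * j) * b ^ (2 * j)) * a ^ i) := by
  set m := (n + 1) / 2 with hm
  -- b ^ n = 0
  have hbn : b ^ n = 0 := by
    have hs : (∑ j ∈ range n, (-b) ^ j * a ^ (n - 1 - j)) = 0 := by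
      rw [← h2]; exact sum_congr rfl fun j _ => mul_comm _ _
    have key := geom_sum₂_mul (-b) a n
    rw [hs, zero_mul, h1, sub_zero] at key
    have hnb : (-b) ^ n = 0 := key.symm
    calc b ^ n = (-1 : A) ^ n * (-b) ^ n := by rw [← neg_pow, neg_neg]
      _ = 0 := by rw [hnb, mul_zero]
  have h2' : ∑ j ∈ range n, (-1 : A) ^ j * (a ^ (n - 1 - j) * b ^ j) = 0 := by
    rw [← h2]
    refine sum_congr rfl fun j _ => ?_
    rw [neg_pow]; ring
  have h2m : 2 * m = n ∨ 2 * m = n + 1 := by omega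
  -- alternating sum with exponent n - j, over range (2*m)
  have ha2 : ∑ j ∈ range (2 * m), (-1 : A) ^ j * (a ^ (n - j) * b ^ j) = 0 := by
    have base : ∑ j ∈ range n, (-1 : A) ^ j * (a ^ (n - j) * b ^ j) = 0 := by
      have e : ∀ j ∈ range n, (-1 : A) ^ j * (a ^ (n - j) * b ^ j)
          = a * ((-1 : A) ^ j * (a ^ (n - 1 - j) * b ^ j)) := by
        intro j hj; rw [mem_range] at hj
        have hx : n - j = (n - 1 - j) + 1 := by omega
        rw [hx, pow_succ]; ring
      rw [sum_congr rfl e, ← mul_sum, h2', mul_zero]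
    rcases h2m with h | h
    · rw [h]; exact base
    · rw [h, sum_range_succ, base, Nat.sub_self]
      simp [hbn]
  -- alternating sum with exponent n - 1 - j, over range (2*m)
  have hc2 : ∑ j ∈ range (2 * m), (-1 : A) ^ j * (a ^ (n - 1 - j) * b ^ j) = 0 := by
    rcases h2m with h | h
    · rw [h]; exact h2'
    · rw [h, sum_range_succ, h2', show n - 1 - n = 0 from by omega]
      simp [hbn]
  set S := ∑ j ∈ range m, a ^ (n - 1 - 2 * j) * b ^ (2 * j) with hSdef
  -- odd part equals S
  have hO : ∑ k ∈ range m, a ^ (n - 1 - (2 * k + 1)) * b ^ (2 * k + 1) = S := by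
    have h := hc2
    rw [two_mul_pair_sum] at h
    have hterm : ∀ k ∈ range m,
        (-1 : A) ^ (2 * k) * (a ^ (n - 1 - 2 * k) * b ^ (2 * k))
          + (-1 : A) ^ (2 * k + 1) * (a ^ (n - 1 - (2 * k + 1)) * b ^ (2 * k + 1))
        = a ^ (n - 1 - 2 * k) * b ^ (2 * k)
          - a ^ (n - 1 - (2 * k + 1)) * b ^ (2 * k + 1) := by
      intro k _
      have he : (-1 : A) ^ (2 * k) = 1 := by rw [pow_mul]; norm_num
      have ho : (-1 : A) ^ (2 * k + 1) = -1 := by rw [pow_succ, he, one_mul]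
      rw [he, ho]; ring
    rw [sum_congr rfl hterm, sum_sub_distrib] at h
    rw [hSdef]
    exact (sub_eq_zero.mp h).symm
  -- S * a = S * b
  have hab : S * a = S * b := by
    rw [hSdef, sum_mul, sum_mul]
    have eL : ∀ j ∈ range m, a ^ (n - 1 - 2 * j) * b ^ (2 * j) * a
        = a ^ (n - 2 * j) * b ^ (2 * j) := by
      intro j hj; rw [mem_range] at hj
      have hx : n - 2 * j = (n - 1 - 2 * j) + 1 := by omega
      rw [hx, pow_succ]; ring
    have eR : ∀ j ∈ range m, a ^ (n - 1 - 2 * j) * b ^ (2 * j) * b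
        = a ^ (n - 1 - 2 * j) * b ^ (2 * j + 1) := by
      intro j _; rw [pow_succ]; ring
    rw [sum_congr rfl eL, sum_congr rfl eR]
    have h := ha2
    rw [two_mul_pair_sum] at h
    have hterm : ∀ k ∈ range m,
        (-1 : A) ^ (2 * k) * (a ^ (n - 2 * k) * b ^ (2 * k))
          + (-1 : A) ^ (2 * k + 1) * (a ^ (n - (2 * k + 1)) * b ^ (2 * k + 1))
        = a ^ (n - 2 * k) * b ^ (2 * k)
          - a ^ (n - 1 - 2 * k) * b ^ (2 * k + 1) := by
      intro k _
      have he : (-1 : A) ^ (2 * k) = 1 := by rw [pow_mul]; norm_num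
      have ho : (-1 : A) ^ (2 * k + 1) = -1 := by rw [pow_succ, he, one_mul]
      have hx : n - (2 * k + 1) = n - 1 - 2 * k := by omega
      rw [he, ho, hx]; ring
    rw [sum_congr rfl hterm, sum_sub_distrib] at h
    exact sub_eq_zero.mp h
  -- S * a ^ k = S * b ^ k
  have hpow : ∀ k : ℕ, S * a ^ k = S * b ^ k := by
    intro k
    induction k with
    | zero => simp
    | succ k ih =>
      calc S * a ^ (k + 1) = (S * a) * a ^ k := by ring
        _ = (S * b) * a ^ k := by rw [hab]
        _ = (S * a ^ k) * b := by ring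
        _ = (S * b ^ k) * b := by rw [ih]
        _ = S * b ^ (k + 1) := by ring
  -- c_{n-1} = 2 S
  have hc : ∑ j ∈ range n, a ^ (n - 1 - j) * b ^ j = 2 * S := by
    have heq : ∑ j ∈ range (2 * m), a ^ (n - 1 - j) * b ^ j
        = ∑ j ∈ range n, a ^ (n - 1 - j) * b ^ j := by
      rcases h2m with h | h
      · rw [h]
      · rw [h, sum_range_succ, show n - 1 - n = 0 from by omega]
        simp [hbn]
    rw [← heq, two_mul_pair_sum, sum_add_distrib, hO, ← hSdef]
    ring
  refine ⟨hpow i, ?_⟩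
  have split : ∑ j ∈ range (n + i), a ^ (n - 1 + i - j) * b ^ j
      = ∑ j ∈ range i, a ^ (n - 1 + i - j) * b ^ j
        + ∑ k ∈ range n, a ^ (n - 1 + i - (i + k)) * b ^ (i + k) := by
    rw [show n + i = i + n from add_comm n i, sum_range_add]
  have z1 : ∑ j ∈ range i, a ^ (n - 1 + i - j) * b ^ j = 0 := by
    apply sum_eq_zero
    intro j hj; rw [mem_range] at hj
    have hx : a ^ (n - 1 + i - j) = a ^ n * a ^ (i - 1 - j) := by
      rw [← pow_add]; congr 1; omega
    rw [hx, h1, zero_mul, zero_mul]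
  have z2 : ∑ k ∈ range n, a ^ (n - 1 + i - (i + k)) * b ^ (i + k)
      = (∑ k ∈ range n, a ^ (n - 1 - k) * b ^ k) * b ^ i := by
    rw [sum_mul]
    refine sum_congr rfl fun k hk => ?_
    rw [mem_range] at hk
    have e1 : n - 1 + i - (i + k) = n - 1 - k := by omega
    have e2 : i + k = k + i := add_comm i k
    rw [e1, e2, pow_add]; ring
  rw [split, z1, z2, hc, zero_add, hpow i]
  ring
end

section
/- Let V be a finite-dimensional vector space over 𝔽₂ with a nondegenerate symmetric bilinear form b, σ a b-preserving linear involution, and p: V → V a projector with adjoint p* (b(p v, u) = b(v, p* u)) such that Im p ⊕ (1+σ)V = V^σ = Im p* ⊕ (1+σ)V. Then the subspace Im p is nondegenerate, and hence V = Im p ⊕ (Im p)^⊥. -/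
/-!
In characteristic `2`, `(1 + σ)V` is orthogonal to every `σ`-fixed vector. If `x ∈ Im p` is
orthogonal to `Im p`, then `B x u = B (p x) u = B x (p* u)`, and `p* u ∈ V^σ = Im p + (1 + σ)V`
is orthogonal to the fixed vector `x`; so `x = 0` by nondegeneracy of `B`. The splitting
`V = Im p ⊕ (Im p)^⊥` then follows by counting dimensions.
-/

namespace LinearMap.BilinForm

variable {R M : Type*} [CommRing R] [AddCommGroup M] [Module R M] (B : LinearMap.BilinForm R M)

theorem range_id_add_le_orthogonal_ker_sub_id [CharP R 2] {σ : M →ₗ[R] M}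
    (hσ : B.IsOrthogonal σ) :
    range (LinearMap.id + σ) ≤ B.orthogonal (ker (σ - LinearMap.id)) := by
  rintro _ ⟨u, rfl⟩ x hx
  have hfix : σ x = x := sub_eq_zero.mp hx
  have hσu : B x (σ u) = B x u := by rw [← hσ x u, hfix]
  simp only [LinearMap.add_apply, LinearMap.id_apply, map_add, hσu, CharTwo.add_self_eq_zero]

theorem disjoint_range_orthogonal_range_of_isAdjoint (hB : B.SeparatingLeft) (hrefl : B.IsRefl)
    {p pstar : M →ₗ[R] M} (hp : p ∘ₗ p = p) (hadj : ∀ v u, B (p v) u = B v (pstar u))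
    {C : Submodule R M} (hC : C ≤ B.orthogonal (range p)) (hle : range pstar ≤ range p ⊔ C) :
    Disjoint (range p) (B.orthogonal (range p)) := by
  rw [Submodule.disjoint_def]
  rintro _ ⟨y, rfl⟩ hy
  refine hB (p y) fun u => ?_
  obtain ⟨a, ha, c, hc, hac⟩ := Submodule.mem_sup.mp (hle ⟨u, rfl⟩)
  calc B (p y) u = B (p (p y)) u := by rw [← LinearMap.comp_apply p p, hp]
    _ = B (p y) (a + c) := by rw [hadj, hac]
    _ = 0 := by rw [map_add, hrefl _ _ (hy a ha), hC hc (p y) ⟨y, rfl⟩, add_zero]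

end LinearMap.BilinForm

theorem image_projector_nondegenerate_general (V : Type*) [AddCommGroup V] [Module (ZMod 2) V]
    [FiniteDimensional (ZMod 2) V]
    (B : LinearMap.BilinForm (ZMod 2) V) (hB : B.Nondegenerate)
    (hsymm : ∀ v u, B v u = B u v)
    (σ : V →ₗ[ZMod 2] V)
    (hiso : ∀ v u, B (σ v) (σ u) = B v u)
    (p pstar : V →ₗ[ZMod 2] V) (hp : p ∘ₗ p = p)
    (hadj : ∀ v u, B (p v) u = B v (pstar u))
    (hsup : LinearMap.range p ⊔ LinearMap.range (LinearMap.id + σ)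
      = LinearMap.ker (σ - LinearMap.id))
    (hsup' : LinearMap.range pstar ⊔ LinearMap.range (LinearMap.id + σ)
      = LinearMap.ker (σ - LinearMap.id)) :
    (B.restrict (LinearMap.range p)).Nondegenerate ∧
    IsCompl (LinearMap.range p) (B.orthogonal (LinearMap.range p)) := by
  have hrefl : B.IsRefl := fun v u h => by rwa [hsymm]
  have hC : LinearMap.range (LinearMap.id + σ) ≤ B.orthogonal (LinearMap.range p) :=
    (B.range_id_add_le_orthogonal_ker_sub_id hiso).trans
      (B.orthogonal_le (hsup ▸ le_sup_left))
  have hle : LinearMap.range pstar ≤ LinearMap.range p ⊔ LinearMap.range (LinearMap.id + σ) :=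
    hsup ▸ hsup' ▸ le_sup_left
  have hnd : (B.restrict (LinearMap.range p)).Nondegenerate :=
    B.nondegenerate_restrict_of_disjoint_orthogonal hrefl
      (B.disjoint_range_orthogonal_range_of_isAdjoint hB.1 hrefl hp hadj hC hle)
  exact ⟨hnd, B.isCompl_orthogonal_of_restrict_nondegenerate hrefl hnd⟩

theorem image_projector_nondegenerate (V : Type*) [AddCommGroup V] [Module (ZMod 2) V]
    [FiniteDimensional (ZMod 2) V]
    (B : LinearMap.BilinForm (ZMod 2) V) (hB : B.Nondegenerate)
    (hsymm : ∀ v u, B v u = B u v)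
    (σ : V →ₗ[ZMod 2] V) (hσ2 : ∀ v, σ (σ v) = v)
    (hiso : ∀ v u, B (σ v) (σ u) = B v u)
    (p pstar : V →ₗ[ZMod 2] V) (hp : p ∘ₗ p = p) (hpstar : pstar ∘ₗ pstar = pstar)
    (hadj : ∀ v u, B (p v) u = B v (pstar u))
    (hinf : LinearMap.range p ⊓ LinearMap.range (LinearMap.id + σ) = ⊥)
    (hsup : LinearMap.range p ⊔ LinearMap.range (LinearMap.id + σ)
      = LinearMap.ker (σ - LinearMap.id))
    (hinf' : LinearMap.range pstar ⊓ LinearMap.range (LinearMap.id + σ) = ⊥)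
    (hsup' : LinearMap.range pstar ⊔ LinearMap.range (LinearMap.id + σ)
      = LinearMap.ker (σ - LinearMap.id)) :
    (B.restrict (LinearMap.range p)).Nondegenerate ∧
    IsCompl (LinearMap.range p) (B.orthogonal (LinearMap.range p)) :=
  image_projector_nondegenerate_general V B hB hsymm σ hiso p pstar hp hadj hsup hsup'
end
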